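/- For f : ℝ³ → ℂ, ‖f‖_{L^{4/3}(ℝ³)} ≲ ‖f‖_{L²(ℝ³)}^{1/4} ‖xf‖_{L²(ℝ³)}^{3/4}, where xf(x) = |x|f(x). -/

import Mathlib

/-!
Write `w x = R + ‖x‖`. Hölder's inequality with `1/p = 1/q + 1/r` gives
`‖ψ‖_p ≤ ‖w ψ‖_q ‖w⁻¹‖_r ≤ (R ‖ψ‖_q + ‖‖x‖ ψ‖_q) ‖w⁻¹‖_r`, and the substitution `x = R y` shows
`‖w⁻¹‖_r = R ^ (n/r - 1) ‖(1 + ‖y‖)⁻¹‖_r`, which is finite as soon as `r > n = dim E`.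
The choice `R = ‖‖x‖ ψ‖_q / ‖ψ‖_q` balances the two terms and yields
`‖ψ‖_p ≲ ‖ψ‖_q ^ (1 - n/r) ‖‖x‖ ψ‖_q ^ (n/r)`; the theorem is the case `n = 3`, `(p, q, r) = (4/3, 2, 4)`.
-/

open MeasureTheory ENNReal Module

theorem ENNReal.le_two_mul_mul_rpow_mul_rpow_of_forall {θ : ℝ} (hθ₀ : 0 < θ) (hθ₁ : θ < 1)
    {X c a b : ℝ≥0∞} (ha : a ≠ 0) (hb : b ≠ 0)
    (h : ∀ R : ℝ, 0 < R → X ≤ ENNReal.ofReal R ^ (θ - 1) * c * (ENNReal.ofReal R * a + b)) :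
    X ≤ 2 * c * a ^ (1 - θ) * b ^ θ := by
  obtain rfl | hc := eq_or_ne c 0
  · simpa using h 1 one_pos
  have hθ₁' : 0 < 1 - θ := by linarith
  obtain rfl | ha' := eq_or_ne a ∞
  · simp [ENNReal.top_rpow_of_pos hθ₁', hc, ENNReal.mul_top, hb, hθ₀.le]
  obtain rfl | hb' := eq_or_ne b ∞
  · rw [ENNReal.top_rpow_of_pos hθ₀, ENNReal.mul_top]
    · exact le_top
    · exact mul_ne_zero (mul_ne_zero two_ne_zero hc) (ENNReal.rpow_pos (pos_iff_ne_zero.2 ha) ha').ne'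
  have hba : ENNReal.ofReal (b / a).toReal = b / a := ofReal_toReal (ENNReal.div_ne_top hb' ha)
  have hR : 0 < (b / a).toReal :=
    ENNReal.toReal_pos (ENNReal.div_ne_zero.2 ⟨hb, ha'⟩) (ENNReal.div_ne_top hb' ha)
  have hpow : (b / a) ^ (θ - 1) = a ^ (1 - θ) * b ^ (θ - 1) := by
    rw [div_eq_mul_inv, ENNReal.mul_rpow_of_ne_top hb' (ENNReal.inv_ne_top.2 ha), ENNReal.inv_rpow,
      ← ENNReal.rpow_neg, neg_sub, mul_comm]
  calc X ≤ (b / a) ^ (θ - 1) * c * (b / a * a + b) := hba ▸ h _ hR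
    _ = 2 * c * a ^ (1 - θ) * (b ^ (θ - 1) * b ^ (1 : ℝ)) := by
      rw [ENNReal.div_mul_cancel ha ha', hpow, ENNReal.rpow_one]
      ring
    _ = 2 * c * a ^ (1 - θ) * b ^ θ := by rw [← ENNReal.rpow_add _ _ hb hb', sub_add_cancel]

section ENNRealValued

variable {α : Type*} [MeasurableSpace α] {μ : Measure α}

theorem ENNReal.eLpNorm'_const_mul {q : ℝ} (hq : 0 < q) {c : ℝ≥0∞} (hc : c ≠ ∞) (f : α → ℝ≥0∞) :
    eLpNorm' (fun x => c * f x) q μ = c * eLpNorm' f q μ := by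
  simp only [eLpNorm', enorm_eq_self, ENNReal.mul_rpow_of_nonneg _ _ hq.le]
  rw [lintegral_const_mul' _ _ (by finiteness), ENNReal.mul_rpow_of_nonneg _ _ (by positivity),
    ← ENNReal.rpow_mul, mul_one_div_cancel hq.ne', ENNReal.rpow_one]

theorem ENNReal.eLpNorm'_mul_le {p q r : ℝ} (hp : 0 < p) (hpq : p < q)
    (hpqr : 1 / p = 1 / q + 1 / r) {f g : α → ℝ≥0∞} (hf : AEMeasurable f μ)
    (hg : AEMeasurable g μ) :
    eLpNorm' (f * g) p μ ≤ eLpNorm' f q μ * eLpNorm' g r μ := by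
  simpa only [eLpNorm', enorm_eq_self] using
    ENNReal.lintegral_Lp_mul_le_Lq_mul_Lr hp hpq hpqr μ hf hg

theorem ENNReal.exists_measurable_le_eLpNorm'_eq {q : ℝ} (hq : 0 < q) (f : α → ℝ≥0∞) :
    ∃ g : α → ℝ≥0∞, Measurable g ∧ g ≤ f ∧ eLpNorm' g q μ = eLpNorm' f q μ := by
  obtain ⟨g, hg, hgf, hint⟩ := exists_measurable_le_lintegral_eq μ fun x => f x ^ q
  refine ⟨fun x => g x ^ q⁻¹, hg.pow_const _, fun x => ?_, ?_⟩
  · exact (ENNReal.rpow_le_rpow (hgf x) (inv_nonneg.2 hq.le)).trans_eq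
      (ENNReal.rpow_rpow_inv hq.ne' _)
  · simp only [eLpNorm', enorm_eq_self, ← ENNReal.rpow_mul, inv_mul_cancel₀ hq.ne',
      ENNReal.rpow_one, hint]

end ENNRealValued

theorem lintegral_one_add_enorm_rpow_neg_ne_zero {E : Type*} [NormedAddCommGroup E]
    [MeasurableSpace E] [OpensMeasurableSpace E] (μ : Measure E) [NeZero μ] (r : ℝ) :
    ∫⁻ x, (1 + ‖x‖ₑ) ^ (-r) ∂μ ≠ 0 := by
  rw [Ne, lintegral_eq_zero_iff (by fun_prop)]
  intro h
  obtain ⟨x, hx⟩ := h.exists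
  simp at hx

section AddHaar

variable {E : Type*} [NormedAddCommGroup E] [NormedSpace ℝ E] [FiniteDimensional ℝ E]
  [MeasurableSpace E] [BorelSpace E] (μ : Measure E) [μ.IsAddHaarMeasure]

theorem lintegral_comp_inv_smul {R : ℝ} (hR : 0 < R) (g : E → ℝ≥0∞) :
    ∫⁻ x, g (R⁻¹ • x) ∂μ = ENNReal.ofReal (R ^ finrank ℝ E) * ∫⁻ x, g x ∂μ := by
  have e := lintegral_map_equiv g (MeasurableEquiv.smul₀ _ (inv_ne_zero hR.ne')) (μ := μ)
  rw [MeasurableEquiv.coe_smul₀, Measure.map_addHaar_smul μ (inv_ne_zero hR.ne')] at e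
  rw [← e, lintegral_smul_measure]
  simp [abs_of_pos hR]

theorem lintegral_add_enorm_rpow_neg {R : ℝ} (hR : 0 < R) (s : ℝ) :
    ∫⁻ x, (ENNReal.ofReal R + ‖x‖ₑ) ^ (-s) ∂μ
      = ENNReal.ofReal R ^ ((finrank ℝ E : ℝ) - s) * ∫⁻ x, (1 + ‖x‖ₑ) ^ (-s) ∂μ := by
  have hR' : ENNReal.ofReal R ≠ 0 := by simpa using hR
  have hsplit (x : E) : ENNReal.ofReal R + ‖x‖ₑ = ENNReal.ofReal R * (1 + ‖R⁻¹ • x‖ₑ) := by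
    rw [enorm_smul, mul_add, mul_one, ← mul_assoc, Real.enorm_of_nonneg (inv_nonneg.2 hR.le),
      ← ENNReal.ofReal_mul hR.le, mul_inv_cancel₀ hR.ne', ENNReal.ofReal_one, one_mul]
  rw [lintegral_congr fun x => by
      rw [hsplit x, ENNReal.mul_rpow_of_ne_top ofReal_ne_top (by finiteness)],
    lintegral_const_mul' _ _ (by finiteness),
    lintegral_comp_inv_smul μ hR (fun x => (1 + ‖x‖ₑ) ^ (-s)), ← mul_assoc,
    ENNReal.ofReal_pow hR.le, ← ENNReal.rpow_natCast, ← ENNReal.rpow_add _ _ hR' ofReal_ne_top,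
    neg_add_eq_sub]

theorem lintegral_one_add_enorm_rpow_neg_lt_top {r : ℝ} (hr : (finrank ℝ E : ℝ) < r) :
    ∫⁻ x, (1 + ‖x‖ₑ) ^ (-r) ∂μ < ∞ := by
  convert finite_integral_one_add_norm (μ := μ) hr using 3 with x
  rw [← ENNReal.ofReal_rpow_of_pos (by positivity), ENNReal.ofReal_add zero_le_one (norm_nonneg x),
    ofReal_norm, ENNReal.ofReal_one]

theorem eLpNorm'_inv_add_enorm {R : ℝ} (hR : 0 < R) {r : ℝ} (hr : 0 < r) :
    eLpNorm' (fun x : E => (ENNReal.ofReal R + ‖x‖ₑ)⁻¹) r μ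
      = ENNReal.ofReal R ^ ((finrank ℝ E : ℝ) / r - 1) *
        (∫⁻ x, (1 + ‖x‖ₑ) ^ (-r) ∂μ) ^ (1 / r) := by
  simp only [eLpNorm', enorm_eq_self, ENNReal.inv_rpow, ← ENNReal.rpow_neg]
  rw [lintegral_add_enorm_rpow_neg μ hR, ENNReal.mul_rpow_of_nonneg _ _ (by positivity),
    ← ENNReal.rpow_mul]
  congr 2
  field_simp

theorem eLpNorm'_le_of_add_norm_weight {ψ : E → ℝ≥0∞} (hψ : AEMeasurable ψ μ) {p q r : ℝ}
    (hq : 1 ≤ q) (hr : 0 < r) (hpqr : 1 / p = 1 / q + 1 / r) {R : ℝ} (hR : 0 < R) :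
    eLpNorm' ψ p μ ≤ ENNReal.ofReal R ^ ((finrank ℝ E : ℝ) / r - 1) *
      (∫⁻ x, (1 + ‖x‖ₑ) ^ (-r) ∂μ) ^ (1 / r) *
      (ENNReal.ofReal R * eLpNorm' ψ q μ + eLpNorm' (fun x => ‖x‖ₑ * ψ x) q μ) := by
  have hpq : 1 / q < 1 / p := by rw [hpqr]; exact lt_add_of_pos_right _ (by positivity)
  have hp : 0 < p := one_div_pos.1 ((one_div_pos.2 (by linarith)).trans hpq)
  replace hpq : p < q := (one_div_lt_one_div (by linarith) hp).1 hpq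
  set w : E → ℝ≥0∞ := fun x => ENNReal.ofReal R + ‖x‖ₑ
  have hw : Measurable w := by fun_prop
  have hψ_eq : ψ = w * ψ * w⁻¹ := by
    ext x
    rw [Pi.mul_apply, Pi.mul_apply, Pi.inv_apply, mul_comm (w x),
      ENNReal.mul_inv_cancel_right (by simp [w, hR]) (by simp [w])]
  have hwψ : w * ψ = (fun x => ENNReal.ofReal R * ψ x) + fun x => ‖x‖ₑ * ψ x := by
    ext x
    simp [w, add_mul]
  calc eLpNorm' ψ p μ = eLpNorm' (w * ψ * w⁻¹) p μ := by rw [← hψ_eq]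
    _ ≤ eLpNorm' (w * ψ) q μ * eLpNorm' w⁻¹ r μ :=
      ENNReal.eLpNorm'_mul_le hp hpq hpqr (hw.aemeasurable.mul hψ) hw.inv.aemeasurable
    _ ≤ (ENNReal.ofReal R * eLpNorm' ψ q μ + eLpNorm' (fun x => ‖x‖ₑ * ψ x) q μ) *
        (ENNReal.ofReal R ^ ((finrank ℝ E : ℝ) / r - 1) *
          (∫⁻ x, (1 + ‖x‖ₑ) ^ (-r) ∂μ) ^ (1 / r)) := by
      rw [show w⁻¹ = fun x => (ENNReal.ofReal R + ‖x‖ₑ)⁻¹ from rfl, eLpNorm'_inv_add_enorm μ hR hr,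
        ← ENNReal.eLpNorm'_const_mul (by linarith) ofReal_ne_top, hwψ]
      gcongr
      exact eLpNorm'_add_le (hψ.const_mul _).aestronglyMeasurable
        (measurable_enorm.aemeasurable.mul hψ).aestronglyMeasurable hq
    _ = _ := mul_comm _ _

theorem eLpNorm'_le_two_mul_mul_rpow_mul_rpow_of_aemeasurable [Nontrivial E] {ψ : E → ℝ≥0∞}
    (hψ : AEMeasurable ψ μ) {p q r : ℝ} (hq : 1 ≤ q) (hr : (finrank ℝ E : ℝ) < r)
    (hpqr : 1 / p = 1 / q + 1 / r) :
    eLpNorm' ψ p μ ≤ 2 * (∫⁻ x, (1 + ‖x‖ₑ) ^ (-r) ∂μ) ^ (1 / r) *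
      eLpNorm' ψ q μ ^ (1 - (finrank ℝ E : ℝ) / r) *
      eLpNorm' (fun x => ‖x‖ₑ * ψ x) q μ ^ ((finrank ℝ E : ℝ) / r) := by
  have hn : (0 : ℝ) < finrank ℝ E := Nat.cast_pos.2 finrank_pos
  have hr₀ : 0 < r := hn.trans hr
  have hp : 0 < p := one_div_pos.1 (by rw [hpqr]; positivity)
  by_cases hzero : ψ =ᵐ[μ] 0
  · rw [eLpNorm'_congr_ae hzero, eLpNorm'_zero hp]
    exact bot_le
  have hA : eLpNorm' ψ q μ ≠ 0 := fun h =>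
    hzero ((eLpNorm'_eq_zero_iff (by linarith) hψ.aestronglyMeasurable).1 h)
  have hB : eLpNorm' (fun x => ‖x‖ₑ * ψ x) q μ ≠ 0 := by
    intro h
    rw [eLpNorm'_eq_zero_iff (f := fun x => ‖x‖ₑ * ψ x) (by linarith)
      (measurable_enorm.aemeasurable.mul hψ).aestronglyMeasurable] at h
    have hne : ∀ᵐ x ∂μ, x ≠ 0 := by simp [ae_iff]
    refine hzero ?_
    filter_upwards [h, hne] with x hx hx0
    simpa [hx0] using hx
  exact ENNReal.le_two_mul_mul_rpow_mul_rpow_of_forall (div_pos hn hr₀) ((div_lt_one hr₀).2 hr)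
    hA hB fun R hR => eLpNorm'_le_of_add_norm_weight μ hψ hq hr₀ hpqr hR

theorem eLpNorm'_le_two_mul_mul_rpow_mul_rpow [Nontrivial E] (ψ : E → ℝ≥0∞) {p q r : ℝ}
    (hq : 1 ≤ q) (hr : (finrank ℝ E : ℝ) < r) (hpqr : 1 / p = 1 / q + 1 / r) :
    eLpNorm' ψ p μ ≤ 2 * (∫⁻ x, (1 + ‖x‖ₑ) ^ (-r) ∂μ) ^ (1 / r) *
      eLpNorm' ψ q μ ^ (1 - (finrank ℝ E : ℝ) / r) *
      eLpNorm' (fun x => ‖x‖ₑ * ψ x) q μ ^ ((finrank ℝ E : ℝ) / r) := by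
  have hr₀ : 0 < r := (Nat.cast_nonneg _).trans_lt hr
  have hp : 0 < p := one_div_pos.1 (by rw [hpqr]; positivity)
  obtain ⟨φ, hφ, hφψ, hφ_eq⟩ := ENNReal.exists_measurable_le_eLpNorm'_eq (μ := μ) hp ψ
  rw [← hφ_eq]
  refine (eLpNorm'_le_two_mul_mul_rpow_mul_rpow_of_aemeasurable μ hφ.aemeasurable hq hr
    hpqr).trans ?_
  gcongr
  · exact sub_nonneg.2 ((div_le_one hr₀).2 hr.le)
  · exact eLpNorm'_mono_enorm_ae (by linarith) (.of_forall fun x => hφψ x)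
  · exact eLpNorm'_mono_enorm_ae (by linarith) (.of_forall fun x => mul_le_mul' le_rfl (hφψ x))

end AddHaar

/-- Weighted interpolation inequality in `ℝ³`:
`‖f‖_{L^{4/3}} ≲ ‖f‖_{L²}^{1/4} ‖xf‖_{L²}^{3/4}`. -/
theorem stmt_11 :
    ∃ C > 0, ∀ f : EuclideanSpace ℝ (Fin 3) → ℂ,
      eLpNorm f (ENNReal.ofReal (4 / 3)) volume ≤
        ENNReal.ofReal C *
          (eLpNorm f 2 volume) ^ ((1 : ℝ) / 4) *
          (eLpNorm (fun x : EuclideanSpace ℝ (Fin 3) => (‖x‖ : ℂ) * f x) 2 volume)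
            ^ ((3 : ℝ) / 4) := by
  set K := ∫⁻ x : EuclideanSpace ℝ (Fin 3), (1 + ‖x‖ₑ) ^ (-4 : ℝ)
  have hdim : (finrank ℝ (EuclideanSpace ℝ (Fin 3)) : ℝ) = 3 := by simp
  have hK : K < ∞ := lintegral_one_add_enorm_rpow_neg_lt_top volume (by rw [hdim]; norm_num)
  have hC₀ : 2 * K ^ (1 / 4 : ℝ) ≠ 0 := mul_ne_zero two_ne_zero
    (ENNReal.rpow_pos (pos_iff_ne_zero.2 (lintegral_one_add_enorm_rpow_neg_ne_zero _ _)) hK.ne).ne'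
  have hC : 2 * K ^ (1 / 4 : ℝ) ≠ ∞ :=
    ENNReal.mul_ne_top ofNat_ne_top (ENNReal.rpow_lt_top_of_nonneg (by norm_num) hK.ne).ne
  refine ⟨(2 * K ^ (1 / 4 : ℝ)).toReal, ENNReal.toReal_pos hC₀ hC, fun f => ?_⟩
  have key := eLpNorm'_le_two_mul_mul_rpow_mul_rpow volume (fun x => ‖f x‖ₑ) (p := 4 / 3)
    (q := 2) (r := 4) one_le_two (by rw [hdim]; norm_num) (by norm_num)
  rw [hdim] at key
  rw [ENNReal.ofReal_toReal hC, eLpNorm_eq_eLpNorm' (by simp) ofReal_ne_top,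
    eLpNorm_eq_eLpNorm' two_ne_zero ofNat_ne_top, eLpNorm_eq_eLpNorm' two_ne_zero ofNat_ne_top,
    ENNReal.toReal_ofReal (by norm_num), ENNReal.toReal_ofNat]
  convert key using 3
  · exact eLpNorm'_enorm.symm
  · rw [eLpNorm'_enorm]
    norm_num
  · rw [← eLpNorm'_enorm]
    simp [enorm, Complex.nnnorm_real]
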